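/- Let (R, m) be a commutative Noetherian local ring of Krull dimension d ≥ 1. Suppose that for every system of parameters a_1, ..., a_d of R, the element a_d is a regular element (non-zerodivisor) on R/(a_1, ..., a_{d-1}). Then m ∉ Ass_R(R). -/

import Mathlib

/-!
If `m = ann(x)` with `x ≠ 0`, Krull's intersection theorem gives `n ≥ 1` with `x ∉ m ^ n`.
Raising a system of parameters `b` to the `n`-th power gives a system of parameters `a` whose
first `d - 1` entries generate an ideal `J ⊆ m ^ n`, so `x ≠ 0` in `R ⧸ J`; but `a_d ∈ m`
kills `x`, so `a_d` is a zero divisor on `R ⧸ J`.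
-/

open IsLocalRing

theorem Ideal.radical_span_range_pow {R ι : Type*} [CommSemiring R] (a : ι → R) {n : ℕ}
    (hn : n ≠ 0) :
    (span (Set.range fun i => a i ^ n)).radical = (span (Set.range a)).radical := by
  refine le_antisymm (radical_mono <| span_le.2 ?_) (radical_le_radical_iff.2 <| span_le.2 ?_)
  · rintro _ ⟨i, rfl⟩
    exact pow_mem_of_mem _ (subset_span (Set.mem_range_self i)) n (Nat.pos_of_ne_zero hn)
  · rintro _ ⟨i, rfl⟩
    exact mem_radical_iff.2 ⟨n, subset_span (Set.mem_range_self i)⟩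

theorem exists_ne_zero_forall_smul_eq_zero_of_mem_associatedPrimes {R M : Type*} [CommRing R]
    [IsNoetherianRing R] [AddCommGroup M] [Module R M] {p : Ideal R}
    (hp : p ∈ associatedPrimes R M) : ∃ x : M, x ≠ 0 ∧ ∀ r ∈ p, r • x = 0 := by
  obtain ⟨hprime, x, rfl⟩ := isAssociatedPrime_iff.1 hp
  refine ⟨x, fun hx => hprime.ne_top ?_,
    fun r hr => by simpa using Submodule.mem_colon_singleton.1 hr⟩
  rw [Ideal.eq_top_iff_one, Submodule.mem_colon_singleton, hx, smul_zero]
  exact Submodule.zero_mem _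

theorem not_isSMulRegular_quotient_of_mul_eq_zero {R : Type*} [CommRing R] {J : Ideal R}
    {r x : R} (hrx : r * x = 0) (hx : x ∉ J) : ¬IsSMulRegular (R ⧸ J) r := by
  intro hreg
  refine hx (Ideal.Quotient.eq_zero_iff_mem.1 (hreg ?_))
  change Ideal.Quotient.mk J (r * x) = r • 0
  rw [hrx, map_zero, smul_zero]

namespace IsLocalRing

variable {R : Type*} [CommRing R] [IsLocalRing R]

theorem radical_eq_maximalIdeal_of_mem_minimalPrimes {I : Ideal R}
    (h : maximalIdeal R ∈ I.minimalPrimes) : I.radical = maximalIdeal R := by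
  have hmin : Minimal (fun q : Ideal R => q.IsPrime ∧ I ≤ q) (maximalIdeal R) := h
  have : I.minimalPrimes = {maximalIdeal R} :=
    Set.eq_singleton_iff_unique_mem.2
      ⟨h, fun q hq => hmin.eq_of_le hq.1 (le_maximalIdeal hq.isPrime.ne_top)⟩
  rw [← Ideal.sInf_minimalPrimes, this, sInf_singleton]

variable [IsNoetherianRing R]

theorem exists_radical_span_eq_maximalIdeal {d : ℕ} (hdim : ringKrullDim R = d) :
    ∃ a : Fin d → R, (Ideal.span (Set.range a)).radical = maximalIdeal R := by
  obtain ⟨s, hs, hcard⟩ := (maximalIdeal R).exists_finset_card_eq_height_of_isNoetherianRing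
  have hcard : Fintype.card s = d := by
    rw [← maximalIdeal_height_eq_ringKrullDim, ← hcard] at hdim
    simpa using hdim
  let e := Fintype.equivFinOfCardEq hcard
  refine ⟨fun i => e.symm i, ?_⟩
  have hrange : Set.range (fun i => (e.symm i : R)) = s := by
    rw [← Subtype.range_coe (s := (s : Set R))]
    exact e.symm.surjective.range_comp _
  rw [hrange]
  exact radical_eq_maximalIdeal_of_mem_minimalPrimes hs

theorem exists_ne_zero_notMem_maximalIdeal_pow {x : R} (hx : x ≠ 0) :
    ∃ n ≠ 0, x ∉ maximalIdeal R ^ n := by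
  have hKrull := Ideal.iInf_pow_eq_bot_of_isLocalRing (maximalIdeal R) Ideal.IsPrime.ne_top'
  obtain ⟨n, hn⟩ : ∃ n, x ∉ maximalIdeal R ^ n := by
    by_contra! hall
    exact hx (by simpa [hKrull] using Ideal.mem_iInf.2 hall)
  refine ⟨n, fun hn0 => hn ?_, hn⟩
  simp [hn0]

end IsLocalRing

theorem maximalIdeal_not_mem_associatedPrimes_of_sop_regular (R : Type*) [CommRing R] [IsNoetherianRing R] [IsLocalRing R]
    (d : ℕ) (hd : 1 ≤ d) (hdim : ringKrullDim R = d)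
    (h : ∀ a : Fin d → R, (∀ i, a i ∈ maximalIdeal R) →
      (Ideal.span (Set.range a)).radical = maximalIdeal R →
      IsSMulRegular (R ⧸ Ideal.span (a '' {j : Fin d | (j : ℕ) < d - 1}))
        (a ⟨d - 1, by omega⟩)) :
    maximalIdeal R ∉ associatedPrimes R R := by
  intro hm
  have mem_of_radical_eq : ∀ {c : Fin d → R},
      (Ideal.span (Set.range c)).radical = maximalIdeal R → ∀ i, c i ∈ maximalIdeal R :=
    fun hc i => hc ▸ Ideal.le_radical (Ideal.subset_span ⟨i, rfl⟩)
  obtain ⟨x, hx0, hmx⟩ := exists_ne_zero_forall_smul_eq_zero_of_mem_associatedPrimes hm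
  obtain ⟨n, hn, hxn⟩ := exists_ne_zero_notMem_maximalIdeal_pow hx0
  obtain ⟨b, hb⟩ := exists_radical_span_eq_maximalIdeal hdim
  set a : Fin d → R := fun i => b i ^ n
  have ha : (Ideal.span (Set.range a)).radical = maximalIdeal R :=
    (Ideal.radical_span_range_pow b hn).trans hb
  have hJ : Ideal.span (a '' {j : Fin d | (j : ℕ) < d - 1}) ≤ maximalIdeal R ^ n := by
    rw [Ideal.span_le]
    rintro _ ⟨i, -, rfl⟩
    exact Ideal.pow_mem_pow (mem_of_radical_eq hb i) n
  exact not_isSMulRegular_quotient_of_mul_eq_zero (hmx _ (mem_of_radical_eq ha _))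
    (fun hxJ => hxn (hJ hxJ)) (h a (mem_of_radical_eq ha) ha)
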